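/- Let p and p' be positive integers. Then, as an identity of meromorphic functions in (u,v,τ) ∈ ℂ×ℂ×ℍ (valid at every point where all terms are defined), A_{2p'}(u/p, v/p; τ/p) = (1/(2p')) Σ_{n=0}^{p−1} Σ_{m=0}^{p−1} e^{2πiu(2m+2p'−p)/(2p)} e^{2πivn/p} e^{2πiτ( n(p'n+m+p')/p − n/2 )} · Σ_{ℓ=0}^{2p'−1} A_1( u+nτ, ((2p'n+m+p')/(2p'))τ − (p/(4p'))τ + (v+ℓ)/(2p'); (p/(2p'))τ ). -/

import Mathlib

open Complex
open scoped Real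

noncomputable section

/-- `e2 x = exp(2πi x)`. -/
def e2 (x : ℂ) : ℂ := Complex.exp (2 * (π : ℂ) * Complex.I * x)

/-- Level K Appell–Lerch sum. -/
def AL (K : ℤ) (u v τ : ℂ) : ℂ :=
  e2 (u * K / 2) * ∑' n : ℤ,
    (-1 : ℂ) ^ (K * n) * e2 (v * n) * e2 (τ * (K * (n : ℂ) * ((n : ℂ) + 1) / 2)) /
      (1 - e2 u * e2 (τ * n))

/-- The predicate that the Appell–Lerch sum with first argument u and modular
variable τ has no vanishing denominators. -/
def ALDefined (u τ : ℂ) : Prop := ∀ n : ℤ, e2 u * e2 (τ * n) ≠ 1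

/-! Write `N = n + p s` with `0 ≤ n < p` and `x = e((u + Nτ)/p)`, so that the level-`2p'` term of
index `N` has denominator `1 - x`. Since `x^p = e(u + nτ) e((pτ/2p') · 2p's)`, the identity
`1/(1 - x) = (∑_{m<p} x^m)/(1 - x^p)` turns it into a sum over `m` of level-`1` terms of
index `2p's` with modular variable `pτ/2p'`. Averaging a level-`1` sum over the shifts
`v ↦ v + ℓ/2p'` keeps exactly its terms of index divisible by `2p'`, which gives the
right-hand side. -/

open Filter Topology

def ALTerm (K : ℤ) (u v τ : ℂ) (n : ℤ) : ℂ :=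
  (-1 : ℂ) ^ (K * n) * e2 (v * n) * e2 (τ * (K * (n : ℂ) * ((n : ℂ) + 1) / 2)) /
    (1 - e2 u * e2 (τ * n))

lemma AL_eq_mul_tsum_ALTerm (K : ℤ) (u v τ : ℂ) :
    AL K u v τ = e2 (u * K / 2) * ∑' n, ALTerm K u v τ n := rfl

lemma e2_add (a b : ℂ) : e2 (a + b) = e2 a * e2 b := by
  simp only [e2, mul_add, Complex.exp_add]

lemma e2_pow (a : ℂ) (n : ℕ) : e2 a ^ n = e2 (n * a) := by
  rw [e2, e2, ← Complex.exp_nat_mul]; ring_nf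

lemma e2_eq_one_iff (z : ℂ) : e2 z = 1 ↔ ∃ n : ℤ, z = n := by
  have h : 2 * (π : ℂ) * I ≠ 0 := by simp [Real.pi_ne_zero, I_ne_zero]
  simp only [e2, Complex.exp_eq_one_iff]
  exact exists_congr fun n =>
    ⟨fun hn => mul_left_cancel₀ h (by rw [hn]; ring), fun hn => by rw [hn]; ring⟩

lemma e2_intCast (n : ℤ) : e2 n = 1 := (e2_eq_one_iff _).2 ⟨n, rfl⟩

lemma norm_e2 (z : ℂ) : ‖e2 z‖ = Real.exp (-(2 * π * z.im)) := by
  simp [e2, Complex.norm_exp, Complex.mul_re, Complex.mul_im]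

lemma e2_mul_e2_eq_jacobiTheta₂_term (K n : ℤ) (v τ : ℂ) :
    e2 (v * n) * e2 (τ * (K * (n : ℂ) * ((n : ℂ) + 1) / 2)) =
      jacobiTheta₂_term n (v + K * τ / 2) (K * τ) := by
  rw [← e2_add, e2, jacobiTheta₂_term]; ring_nf

lemma norm_inv_one_sub_le_two {𝕜 : Type*} [NormedDivisionRing 𝕜] {w : 𝕜}
    (hw : ‖w‖ ≤ 1 / 2 ∨ 2 ≤ ‖w‖) : ‖(1 - w)⁻¹‖ ≤ 2 := by
  rw [norm_inv]
  refine inv_le_of_inv_le₀ (by norm_num) ?_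
  rcases hw with hw | hw
  · linarith [norm_sub_norm_le 1 w, norm_one (α := 𝕜)]
  · linarith [norm_sub_norm_le w 1, norm_one (α := 𝕜), norm_sub_rev w 1]

lemma eventually_cofinite_norm_e2_mul_e2 (u : ℂ) {τ : ℂ} (hτ : 0 < τ.im) :
    ∀ᶠ n : ℤ in cofinite,
      ‖e2 u * e2 (τ * n)‖ ≤ 1 / 2 ∨ 2 ≤ ‖e2 u * e2 (τ * n)‖ := by
  have hnorm (n : ℤ) :
      ‖e2 u * e2 (τ * n)‖ = Real.exp (-(2 * π * u.im) + -(2 * π * τ.im) * n) := by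
    rw [norm_mul, norm_e2, norm_e2, ← Real.exp_add]
    simp [Complex.mul_im]; ring
  have hc : -(2 * π * τ.im) < 0 := by nlinarith [Real.pi_pos]
  have hcast_top : Tendsto (fun n : ℤ => (n : ℝ)) atTop atTop := tendsto_intCast_atTop_atTop
  have hcast_bot : Tendsto (fun n : ℤ => (n : ℝ)) atBot atBot :=
    tendsto_intCast_atBot_iff.2 tendsto_id
  have htop : Tendsto (fun n : ℤ => ‖e2 u * e2 (τ * n)‖) atTop (𝓝 0) := by
    simp_rw [hnorm]
    exact Real.tendsto_exp_atBot.comp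
      (tendsto_atBot_add_const_left _ _ (hcast_top.const_mul_atTop_of_neg hc))
  have hbot : Tendsto (fun n : ℤ => ‖e2 u * e2 (τ * n)‖) atBot atTop := by
    simp_rw [hnorm]
    exact Real.tendsto_exp_atTop.comp
      (tendsto_atTop_add_const_left _ _ (hcast_bot.const_mul_atBot_of_neg hc))
  rw [Int.cofinite_eq]
  exact mem_sup.2 ⟨(hbot.eventually_ge_atTop 2).mono fun _ => Or.inr,
    (htop.eventually (ge_mem_nhds (by norm_num))).mono fun _ => Or.inl⟩

-- The numerator is a Jacobi theta term, and off finitely many `n` the reciprocal of the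
-- denominator is bounded by `2`.
lemma summable_ALTerm {K : ℤ} (hK : 0 < K) (u v : ℂ) {τ : ℂ} (hτ : 0 < τ.im) :
    Summable (ALTerm K u v τ) := by
  have hθ : Summable fun n => ‖jacobiTheta₂_term n (v + K * τ / 2) (K * τ)‖ :=
    ((summable_jacobiTheta₂_term_iff _ _).2 (by simpa using mul_pos (Int.cast_pos.2 hK) hτ)).norm
  refine Summable.of_norm_bounded_eventually (hθ.mul_left 2) ?_
  filter_upwards [eventually_cofinite_norm_e2_mul_e2 u hτ] with n hn
  rw [ALTerm, mul_assoc, e2_mul_e2_eq_jacobiTheta₂_term, div_eq_mul_inv, norm_mul, norm_mul,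
    norm_zpow, norm_neg, norm_one, one_zpow, one_mul, mul_comm]
  exact mul_le_mul_of_nonneg_right (norm_inv_one_sub_le_two hn) (norm_nonneg _)

lemma sum_range_e2_mul_div {M : ℕ} (hM : 0 < M) (k : ℤ) :
    ∑ l ∈ Finset.range M, e2 (k * l / M) = if (M : ℤ) ∣ k then (M : ℂ) else 0 := by
  have hM' : (M : ℂ) ≠ 0 := Nat.cast_ne_zero.2 hM.ne'
  have hpow : ∀ l : ℕ, e2 (k * l / M) = e2 (k / M) ^ l := fun l => by
    rw [e2_pow]; ring_nf
  simp_rw [hpow]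
  have hroot_iff : e2 (k / M) = 1 ↔ (M : ℤ) ∣ k := by
    rw [e2_eq_one_iff]
    refine ⟨fun ⟨j, hj⟩ => ⟨j, ?_⟩, fun ⟨j, hj⟩ => ⟨j, ?_⟩⟩
    · rw [div_eq_iff hM'] at hj; exact_mod_cast hj.trans (mul_comm _ _)
    · rw [hj]; push_cast; field_simp
  split_ifs with hdvd
  · simp [hroot_iff.2 hdvd]
  · have hroot : e2 (k / M) ^ M = 1 := by
      rw [e2_pow, mul_div_cancel₀ _ hM', e2_intCast]
    have := geom_sum_mul (e2 (k / M)) M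
    rw [hroot, sub_self] at this
    exact (mul_eq_zero.1 this).resolve_right (sub_ne_zero.2 (mt hroot_iff.1 hdvd))

lemma tsum_ite_dvd {α : Type*} [AddCommMonoid α] [TopologicalSpace α] {M : ℕ} (hM : 0 < M)
    (f : ℤ → α) :
    ∑' k : ℤ, (if (M : ℤ) ∣ k then f k else 0) = ∑' s : ℤ, f (M * s) := by
  have hinj : Function.Injective fun s : ℤ => (M : ℤ) * s :=
    mul_right_injective₀ (by exact_mod_cast hM.ne')
  rw [← hinj.tsum_eq]
  · simp
  · intro k hk
    obtain ⟨s, rfl⟩ : (M : ℤ) ∣ k := by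
      by_contra hdvd
      exact hk (if_neg hdvd)
    exact ⟨s, rfl⟩

lemma sum_range_tsum_mul_e2 {M : ℕ} (hM : 0 < M) {a : ℤ → ℂ} (ha : Summable a) :
    ∑ l ∈ Finset.range M, ∑' k : ℤ, a k * e2 (k * l / M) = M * ∑' s : ℤ, a (M * s) := by
  rw [← Summable.tsum_finsetSum fun l _ => ?_]
  · simp_rw [← Finset.mul_sum, sum_range_e2_mul_div hM, mul_ite, mul_zero, tsum_ite_dvd hM,
      tsum_mul_right, mul_comm]
  · refine Summable.of_norm_bounded ha.norm fun k => ?_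
    rw [norm_mul, norm_e2]
    simp [Complex.div_im]

lemma tsum_eq_sum_range_tsum {R : Type*} [AddCommGroup R] [UniformSpace R] [IsUniformAddGroup R]
    [CompleteSpace R] [T0Space R] {f : ℤ → R} (hf : Summable f) (p : ℕ) [NeZero p] :
    ∑' N, f N = ∑ n ∈ Finset.range p, ∑' s : ℤ, f (n + p * s) := by
  let e : Fin p × ℤ ≃ ℤ := (Equiv.prodComm _ _).trans (Int.divModEquiv p).symm
  have he : ∀ x, e x = x.1 + p * x.2 := fun x => by simp [e]; ring
  have hfe : Summable (f ∘ e) := hf.comp_injective e.injective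
  rw [← e.tsum_eq, ← Function.comp_def f e, hfe.tsum_prod' fun n => ?_, tsum_fintype,
    ← Fin.sum_univ_eq_sum_range (fun n => ∑' s : ℤ, f (n + p * s))]
  · simp only [Function.comp_apply, he]
  · exact hfe.comp_injective (Prod.mk_right_injective n)

lemma ALTerm_add_right (K : ℤ) (u v w τ : ℂ) (n : ℤ) :
    ALTerm K u (v + w) τ n = ALTerm K u v τ n * e2 (n * w) := by
  simp only [ALTerm, add_mul, e2_add]
  ring_nf

lemma sum_range_AL_add_div {K : ℤ} (hK : 0 < K) {M : ℕ} (hM : 0 < M) (u v : ℂ) {τ : ℂ}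
    (hτ : 0 < τ.im) :
    ∑ l ∈ Finset.range M, AL K u (v + l / M) τ =
      M * (e2 (u * K / 2) * ∑' s : ℤ, ALTerm K u v τ (M * s)) := by
  simp_rw [AL_eq_mul_tsum_ALTerm, ← Finset.mul_sum, ALTerm_add_right, mul_div_assoc']
  rw [sum_range_tsum_mul_e2 hM (summable_ALTerm hK u v hτ)]
  ring

lemma inv_one_sub_eq_geom_sum_mul_inv {K : Type*} [Field K] {x : K} {p : ℕ} (h : x ^ p ≠ 1) :
    (1 - x)⁻¹ = (∑ m ∈ Finset.range p, x ^ m) * (1 - x ^ p)⁻¹ := by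
  have hx : 1 - x ≠ 0 := by
    rintro hx
    rw [← sub_eq_zero.1 hx, one_pow] at h
    exact h rfl
  rw [eq_mul_inv_iff_mul_eq₀ (sub_ne_zero.2 h.symm), ← mul_neg_geom_sum,
    inv_mul_cancel_left₀ hx]

-- The `(n, m)` summand on the right is `decompCoeff` times the sum over `ℓ` of level-`1` sums in
-- the second argument `decompShift + ℓ/2p'`; `decompTerm … s` is the term of index `2p's` of the
-- unshifted one, with its prefactor.
def decompCoeff (p p' n m : ℕ) (u v τ : ℂ) : ℂ :=
  e2 (u * ((2 * (m : ℂ) + 2 * p' - p) / (2 * p))) * e2 (v * n / p) *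
    e2 (τ * ((n : ℂ) * ((p' : ℂ) * n + m + p') / p - (n : ℂ) / 2))

def decompShift (p p' n m : ℕ) (v τ : ℂ) : ℂ :=
  ((2 * (p' : ℂ) * n + m + p') / (2 * p')) * τ - ((p : ℂ) / (4 * p')) * τ + v / (2 * p')

def decompTerm (p p' n m : ℕ) (u v τ : ℂ) (s : ℤ) : ℂ :=
  e2 ((u + n * τ) * (1 : ℤ) / 2) *
    ALTerm 1 (u + n * τ) (decompShift p p' n m v τ) ((p : ℂ) / (2 * p') * τ) (2 * p' * s)

lemma sum_decompCoeff_mul_decompTerm {p p' : ℕ} (hp : p ≠ 0) (hp' : p' ≠ 0) (u v τ : ℂ)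
    (n : ℕ) (s : ℤ)
    (hden : e2 (u + n * τ) * e2 ((p : ℂ) / (2 * p') * τ * ((2 * p' * s : ℤ) : ℂ)) ≠ 1) :
    ∑ m ∈ Finset.range p, decompCoeff p p' n m u v τ * decompTerm p p' n m u v τ s =
      e2 (u / p * (2 * p' : ℤ) / 2) * ALTerm (2 * p') (u / p) (v / p) (τ / p) (n + p * s) := by
  have hpc : (p : ℂ) ≠ 0 := Nat.cast_ne_zero.2 hp
  have hp'c : (p' : ℂ) ≠ 0 := Nat.cast_ne_zero.2 hp'
  set N : ℂ := n + p * s with hN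
  set x := e2 ((u + N * τ) / p) with hx
  have hxp :
      x ^ p = e2 (u + n * τ) * e2 ((p : ℂ) / (2 * p') * τ * ((2 * p' * s : ℤ) : ℂ)) := by
    rw [hx, e2_pow, ← e2_add, hN]; congr 1; push_cast; field_simp; ring
  have hsign (k : ℤ) : (-1 : ℂ) ^ (2 * p' * k) = 1 :=
    ((even_two_mul _).mul_right _).neg_one_zpow
  have hlhs : ALTerm (2 * p') (u / p) (v / p) (τ / p) (n + p * s) =
      e2 (v * N / p + τ * p' * N * (N + 1) / p) / (1 - x) := by
    rw [ALTerm, hsign, one_mul, ← e2_add, ← e2_add, hx, hN]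
    congr 3 <;> push_cast <;> ring
  have hterm (m : ℕ) : decompCoeff p p' n m u v τ * decompTerm p p' n m u v τ s =
      e2 (u * p' / p + (v * N / p + τ * p' * N * (N + 1) / p) + m * ((u + N * τ) / p)) /
        (1 - x ^ p) := by
    rw [decompTerm, ALTerm, one_mul, hsign, one_mul, ← hxp]
    simp only [decompCoeff, decompShift, mul_div_assoc', ← e2_add, ← mul_assoc]
    congr 2
    rw [hN]
    push_cast
    field_simp
    ring
  rw [Finset.sum_congr rfl fun m _ => hterm m, hlhs, div_eq_mul_inv _ (1 - x),
    inv_one_sub_eq_geom_sum_mul_inv (by rwa [hxp]), ← Finset.sum_div, div_eq_mul_inv,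
    ← mul_assoc, ← mul_assoc, Finset.mul_sum]
  congr 1
  refine Finset.sum_congr rfl fun m _ => ?_
  rw [e2_add, e2_add, hx, e2_pow]
  congr 3
  push_cast
  ring

lemma sum_decompCoeff_mul_tsum_decompTerm {p p' : ℕ} (hp : p ≠ 0) (hp' : p' ≠ 0)
    (u v τ : ℂ) (hτ : 0 < ((p : ℂ) / (2 * p') * τ).im) (n : ℕ)
    (hden : ALDefined (u + n * τ) ((p : ℂ) / (2 * p') * τ)) :
    ∑ m ∈ Finset.range p,
        decompCoeff p p' n m u v τ * ∑' s : ℤ, decompTerm p p' n m u v τ s =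
      ∑' s : ℤ, e2 (u / p * (2 * p' : ℤ) / 2) *
        ALTerm (2 * p') (u / p) (v / p) (τ / p) (n + p * s) := by
  have hsummable (m : ℕ) :
      Summable fun s : ℤ => decompCoeff p p' n m u v τ * decompTerm p p' n m u v τ s :=
    (((summable_ALTerm one_pos _ _ hτ).comp_injective
      (mul_right_injective₀ (by omega))).mul_left _).mul_left _
  simp_rw [← tsum_mul_left, ← sum_decompCoeff_mul_decompTerm hp hp' u v τ n _ (hden _)]
  exact (Summable.tsum_finsetSum fun m _ => hsummable m).symm

lemma sum_range_AL_one_decompShift {p' : ℕ} (hp' : 0 < p') (p n m : ℕ) (u v τ : ℂ)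
    (hτ : 0 < ((p : ℂ) / (2 * p') * τ).im) :
    ∑ l ∈ Finset.range (2 * p'), AL 1 (u + n * τ)
        (((2 * (p' : ℂ) * n + m + p') / (2 * p')) * τ - ((p : ℂ) / (4 * p')) * τ +
          (v + l) / (2 * p'))
        ((p : ℂ) / (2 * p') * τ) =
      2 * p' * ∑' s : ℤ, decompTerm p p' n m u v τ s := by
  have hshift (l : ℕ) :
      ((2 * (p' : ℂ) * n + m + p') / (2 * p')) * τ - ((p : ℂ) / (4 * p')) * τ +
          (v + l) / (2 * p') = decompShift p p' n m v τ + l / (2 * p' : ℕ) := by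
    rw [decompShift]; push_cast; ring
  rw [Finset.sum_congr rfl fun l _ => congrArg (AL 1 _ · _) (hshift l),
    sum_range_AL_add_div one_pos (by omega) _ _ hτ]
  simp only [decompTerm, tsum_mul_left]
  push_cast
  ring

theorem appell_lerch_decomposition_general (p p' : ℕ) (hp : 0 < p) (hp' : 0 < p')
    (u v τ : ℂ) (hτ : 0 < τ.im)
    (hR : ∀ n : ℕ, n < p → ALDefined (u + n * τ) (((p : ℂ) / (2 * p')) * τ)) :
    AL (2 * p') (u / p) (v / p) (τ / p) =
      (1 / (2 * (p' : ℂ))) * ∑ n ∈ Finset.range p, ∑ m ∈ Finset.range p,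
        e2 (u * ((2 * (m : ℂ) + 2 * p' - p) / (2 * p))) * e2 (v * n / p) *
          e2 (τ * ((n : ℂ) * ((p' : ℂ) * n + m + p') / p - (n : ℂ) / 2)) *
          ∑ l ∈ Finset.range (2 * p'),
            AL 1 (u + n * τ)
              (((2 * (p' : ℂ) * n + m + p') / (2 * p')) * τ - ((p : ℂ) / (4 * p')) * τ +
                (v + l) / (2 * p'))
              (((p : ℂ) / (2 * p')) * τ) := by
  have : NeZero p := ⟨hp.ne'⟩
  have hp'c : (p' : ℂ) ≠ 0 := Nat.cast_ne_zero.2 hp'.ne'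
  have hτp : 0 < (τ / p).im := by rw [div_natCast_im]; positivity
  have hω : 0 < ((p : ℂ) / (2 * p') * τ).im := by
    rw [show (p : ℂ) / (2 * p') = ((p / (2 * p') : ℝ) : ℂ) by push_cast; rfl, im_ofReal_mul]
    positivity
  calc AL (2 * p') (u / p) (v / p) (τ / p)
      = ∑ n ∈ Finset.range p, ∑' s : ℤ, e2 (u / p * (2 * p' : ℤ) / 2) *
          ALTerm (2 * p') (u / p) (v / p) (τ / p) (n + p * s) := by
        rw [AL_eq_mul_tsum_ALTerm, tsum_eq_sum_range_tsum (summable_ALTerm (by omega) _ _ hτp) p,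
          Finset.mul_sum]
        simp_rw [tsum_mul_left]
    _ = ∑ n ∈ Finset.range p, ∑ m ∈ Finset.range p,
          decompCoeff p p' n m u v τ * ∑' s : ℤ, decompTerm p p' n m u v τ s :=
        Finset.sum_congr rfl fun n hn => (sum_decompCoeff_mul_tsum_decompTerm hp.ne' hp'.ne' u v τ
          hω n (hR n (Finset.mem_range.1 hn))).symm
    _ = _ := by
        simp_rw [sum_range_AL_one_decompShift hp' _ _ _ u v τ hω, Finset.mul_sum]
        refine Finset.sum_congr rfl fun n _ => Finset.sum_congr rfl fun m _ => ?_
        rw [decompCoeff]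
        field_simp

/-- Decomposition of the level-2p' Appell–Lerch sum into level-1 Appell–Lerch sums. -/
theorem appell_lerch_decomposition (p p' : ℕ) (hp : 0 < p) (hp' : 0 < p')
    (u v τ : ℂ) (hτ : 0 < τ.im)
    (hL : ALDefined (u / p) (τ / p))
    (hR : ∀ n : ℕ, n < p → ALDefined (u + n * τ) (((p : ℂ) / (2 * p')) * τ)) :
    AL (2 * p') (u / p) (v / p) (τ / p) =
      (1 / (2 * (p' : ℂ))) * ∑ n ∈ Finset.range p, ∑ m ∈ Finset.range p,
        e2 (u * ((2 * (m : ℂ) + 2 * p' - p) / (2 * p))) * e2 (v * n / p) *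
          e2 (τ * ((n : ℂ) * ((p' : ℂ) * n + m + p') / p - (n : ℂ) / 2)) *
          ∑ l ∈ Finset.range (2 * p'),
            AL 1 (u + n * τ)
              (((2 * (p' : ℂ) * n + m + p') / (2 * p')) * τ - ((p : ℂ) / (4 * p')) * τ +
                (v + l) / (2 * p'))
              (((p : ℂ) / (2 * p')) * τ) :=
  appell_lerch_decomposition_general p p' hp hp' u v τ hτ hR

end
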